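/- Let D ∈ ℝ^{n×N} be a tight frame, and suppose there exists a nonzero (s−1)-sparse vector v ∈ ker D. Then every f ∈ ℝ^n is effectively s-synthesis-sparse: there exists an effectively s-sparse u' ∈ ℝ^N (‖u'‖₁ ≤ √s ‖u'‖₂) with f = Du'. -/

import Mathlib

noncomputable def norm2 {ι : Type*} [Fintype ι] (x : ι → ℝ) : ℝ :=
  Real.sqrt (∑ i, x i ^ 2)

noncomputable def norm1 {ι : Type*} [Fintype ι] (x : ι → ℝ) : ℝ := ∑ i, |x i|

/-!
Since `D Dᵀ = 1`, the vector `u = Dᵀ f` already satisfies `D u = f`, and so does `c v + u` for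
every scalar `c`, because `v ∈ ker D`. By Cauchy–Schwarz on its support, `v` satisfies
`‖v‖₁ ≤ √(s-1) ‖v‖₂`, strictly better than the required ratio `√s`; for `c` large, `c v`
dominates `u` and `c v + u` inherits the ratio `√s`.
-/

section SparsityRatio

variable {ι : Type*} [Fintype ι]

lemma norm2_eq_norm_toLp (x : ι → ℝ) : norm2 x = ‖WithLp.toLp 2 x‖ := by
  simp [norm2, EuclideanSpace.norm_eq]

lemma norm1_eq_norm_toLp (x : ι → ℝ) : norm1 x = ‖WithLp.toLp 1 x‖ := by
  simp [norm1, PiLp.norm_eq_of_L1]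

lemma norm1_nonneg (x : ι → ℝ) : 0 ≤ norm1 x :=
  Finset.sum_nonneg fun _ _ => abs_nonneg _

lemma norm2_nonneg (x : ι → ℝ) : 0 ≤ norm2 x :=
  Real.sqrt_nonneg _

lemma norm2_pos {x : ι → ℝ} (hx : x ≠ 0) : 0 < norm2 x := by
  simpa [norm2_eq_norm_toLp] using hx

lemma norm1_le_sqrt_card_support_mul_norm2 (x : ι → ℝ) :
    norm1 x ≤ Real.sqrt (Finset.univ.filter fun j => x j ≠ 0).card * norm2 x := by
  set T := Finset.univ.filter fun j => x j ≠ 0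
  have hT_sum {g : ℝ → ℝ} (hg : g 0 = 0) : ∑ i ∈ T, g (x i) = ∑ i, g (x i) :=
    Finset.sum_filter_of_ne fun i _ hi => fun h0 => hi (by rw [h0, hg])
  calc norm1 x = ∑ i ∈ T, 1 * |x i| := by simpa [norm1] using (hT_sum abs_zero).symm
    _ ≤ Real.sqrt (∑ i ∈ T, (1 : ℝ) ^ 2) * Real.sqrt (∑ i ∈ T, |x i| ^ 2) :=
        Real.sum_mul_le_sqrt_mul_sqrt T _ _
    _ = Real.sqrt T.card * norm2 x := by
        simp only [one_pow, Finset.sum_const, nsmul_eq_mul, mul_one, sq_abs, norm2]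
        rw [hT_sum (g := fun t => t ^ 2) (zero_pow two_ne_zero)]

lemma exists_norm1_smul_add_le_mul_norm2 {v : ι → ℝ} (hv : v ≠ 0) {a b : ℝ}
    (hva : norm1 v ≤ a * norm2 v) (hab : a < b) (u : ι → ℝ) :
    ∃ c : ℝ, norm1 (c • v + u) ≤ b * norm2 (c • v + u) := by
  have hv2 : 0 < norm2 v := norm2_pos hv
  have ha : 0 ≤ a := nonneg_of_mul_nonneg_left ((norm1_nonneg v).trans hva) hv2
  have hb : 0 ≤ b := ha.trans hab.le
  set c := (norm1 u + b * norm2 u) / ((b - a) * norm2 v)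
  have hc : 0 ≤ c := div_nonneg (add_nonneg (norm1_nonneg u) (mul_nonneg hb (norm2_nonneg u)))
    (mul_nonneg (sub_nonneg.2 hab.le) hv2.le)
  have h1 : norm1 (c • v + u) ≤ c * norm1 v + norm1 u := by
    simpa [norm1_eq_norm_toLp, norm_smul, abs_of_nonneg hc] using
      norm_add_le (c • WithLp.toLp 1 v) (WithLp.toLp 1 u)
  have h2 : c * norm2 v - norm2 u ≤ norm2 (c • v + u) := by
    simpa [norm2_eq_norm_toLp, norm_smul, abs_of_nonneg hc] using
      norm_sub_le_norm_add (c • WithLp.toLp 2 v) (WithLp.toLp 2 u)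
  refine ⟨c, ?_⟩
  calc norm1 (c • v + u) ≤ c * (a * norm2 v) + norm1 u :=
        h1.trans (add_le_add_left (mul_le_mul_of_nonneg_left hva hc) _)
    _ = b * (c * norm2 v - norm2 u) := by
        simp only [c]; field_simp [(sub_pos.2 hab).ne', hv2.ne']; ring
    _ ≤ b * norm2 (c • v + u) := mul_le_mul_of_nonneg_left h2 hb

end SparsityRatio

lemma Matrix.mulVec_transpose_mulVec_of_mul_transpose_eq_one {m n R : Type*} [Fintype m]
    [Fintype n] [DecidableEq m] [Semiring R] {D : Matrix m n R} (hD : D * D.transpose = 1)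
    (f : m → R) :
    D.mulVec (D.transpose.mulVec f) = f := by
  rw [Matrix.mulVec_mulVec, hD, Matrix.one_mulVec]

/-- If a tight frame D has a nonzero (s−1)-sparse vector in its kernel, then every signal is
effectively s-synthesis-sparse. -/
theorem stmt16 (n N s : ℕ) (hs : 1 ≤ s)
    (D : Matrix (Fin n) (Fin N) ℝ) (hD : D * D.transpose = 1)
    (v : Fin N → ℝ) (hv0 : v ≠ 0)
    (hvsp : (Finset.univ.filter fun j => v j ≠ 0).card ≤ s - 1)
    (hvker : D.mulVec v = 0) :
    ∀ f : Fin n → ℝ, ∃ u' : Fin N → ℝ,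
      norm1 u' ≤ Real.sqrt s * norm2 u' ∧ D.mulVec u' = f := by
  intro f
  have hv : norm1 v ≤ Real.sqrt (s - 1 : ℕ) * norm2 v :=
    (norm1_le_sqrt_card_support_mul_norm2 v).trans <| mul_le_mul_of_nonneg_right
      (Real.sqrt_le_sqrt (by exact_mod_cast hvsp)) (norm2_pos hv0).le
  have hlt : Real.sqrt (s - 1 : ℕ) < Real.sqrt s :=
    Real.sqrt_lt_sqrt (Nat.cast_nonneg _) (by exact_mod_cast Nat.sub_lt hs one_pos)
  obtain ⟨c, hc⟩ :=
    exists_norm1_smul_add_le_mul_norm2 hv0 hv hlt (D.transpose.mulVec f)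
  refine ⟨c • v + D.transpose.mulVec f, hc, ?_⟩
  rw [Matrix.mulVec_add, Matrix.mulVec_smul, hvker, smul_zero, zero_add,
    Matrix.mulVec_transpose_mulVec_of_mul_transpose_eq_one hD]
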